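/- The couple (ℓ²₂, ℓ∞₂) is an exact Calderón couple: if f, g ∈ ℝ² satisfy K(t,g) ≤ K(t,f) for all t > 0, where K(t,x) = inf{‖x − y‖₂ + t·‖y‖_∞ : y ∈ ℝ²} with ‖·‖₂ the Euclidean norm and ‖·‖_∞ the sup norm on ℝ², then there exists a linear map T : ℝ² → ℝ² with Tf = g, ‖Tx‖₂ ≤ ‖x‖₂ for all x ∈ ℝ², and ‖Tx‖_∞ ≤ ‖x‖_∞ for all x ∈ ℝ². -/

import Mathlib

/-- The K-functional for the couple `(ℓ²₂, ℓ∞₂)` on `ℝ² = Fin 2 → ℝ`. -/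
noncomputable def Kcouple (t : ℝ) (x : Fin 2 → ℝ) : ℝ :=
  sInf {s : ℝ | ∃ y : Fin 2 → ℝ,
    s = Real.sqrt (∑ i, (x i - y i) ^ 2) + t * ⨆ i, |y i|}


lemma sup2 (u : Fin 2 → ℝ) : (⨆ i, u i) = max (u 0) (u 1) := by
  apply le_antisymm
  · apply ciSup_le
    intro i
    fin_cases i
    · exact le_max_left _ _
    · exact le_max_right _ _
  · apply max_le
    · exact le_ciSup (Set.finite_range u).bddAbove 0
    · exact le_ciSup (Set.finite_range u).bddAbove 1

lemma triangle2 (x0 x1 y0 y1 : ℝ) :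
    Real.sqrt (x0^2 + x1^2) ≤ Real.sqrt ((x0-y0)^2 + (x1-y1)^2) + Real.sqrt (y0^2 + y1^2) := by
  have hA : (0:ℝ) ≤ Real.sqrt ((x0-y0)^2 + (x1-y1)^2) := Real.sqrt_nonneg _
  have hB : (0:ℝ) ≤ Real.sqrt (y0^2 + y1^2) := Real.sqrt_nonneg _
  rw [← Real.sqrt_sq (add_nonneg hA hB)]
  apply Real.sqrt_le_sqrt
  have hA2 : (Real.sqrt ((x0-y0)^2 + (x1-y1)^2))^2 = (x0-y0)^2 + (x1-y1)^2 :=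
    Real.sq_sqrt (by positivity)
  have hB2 : (Real.sqrt (y0^2 + y1^2))^2 = y0^2 + y1^2 := Real.sq_sqrt (by positivity)
  have hCS : ((x0-y0)*y0 + (x1-y1)*y1)^2 ≤ ((x0-y0)^2 + (x1-y1)^2) * (y0^2 + y1^2) := by
    nlinarith [sq_nonneg ((x0-y0)*y1 - (x1-y1)*y0)]
  have hcs : (x0-y0)*y0 + (x1-y1)*y1 ≤ Real.sqrt ((x0-y0)^2 + (x1-y1)^2) * Real.sqrt (y0^2 + y1^2) := by
    have h1 : (x0-y0)*y0 + (x1-y1)*y1 ≤ |(x0-y0)*y0 + (x1-y1)*y1| := le_abs_self _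
    have h2 : |(x0-y0)*y0 + (x1-y1)*y1| = Real.sqrt (((x0-y0)*y0 + (x1-y1)*y1)^2) :=
      (Real.sqrt_sq_eq_abs _).symm
    have h3 : Real.sqrt (((x0-y0)*y0 + (x1-y1)*y1)^2) ≤
        Real.sqrt (((x0-y0)^2 + (x1-y1)^2) * (y0^2 + y1^2)) := Real.sqrt_le_sqrt hCS
    rw [Real.sqrt_mul (by positivity)] at h3
    linarith
  nlinarith [hcs]

lemma Kset_bddBelow (t : ℝ) (ht : 0 ≤ t) (x : Fin 2 → ℝ) :
    BddBelow {s : ℝ | ∃ y : Fin 2 → ℝ,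
      s = Real.sqrt (∑ i, (x i - y i) ^ 2) + t * ⨆ i, |y i|} := by
  refine ⟨0, ?_⟩
  rintro s ⟨y, rfl⟩
  have h1 : (0:ℝ) ≤ Real.sqrt (∑ i, (x i - y i) ^ 2) := Real.sqrt_nonneg _
  have h2 : (0:ℝ) ≤ ⨆ i, |y i| := by
    rw [sup2]
    exact le_max_of_le_left (abs_nonneg _)
  nlinarith

lemma Kset_nonempty (t : ℝ) (x : Fin 2 → ℝ) :
    Set.Nonempty {s : ℝ | ∃ y : Fin 2 → ℝ,
      s = Real.sqrt (∑ i, (x i - y i) ^ 2) + t * ⨆ i, |y i|} :=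
  ⟨_, ⟨x, rfl⟩⟩

lemma K_one_le (x : Fin 2 → ℝ) : Kcouple 1 x ≤ max |x 0| |x 1| := by
  apply csInf_le (Kset_bddBelow 1 one_pos.le x)
  refine ⟨x, ?_⟩
  simp [sup2 (fun i => |x i|)]

lemma le_K_one (x : Fin 2 → ℝ) : max |x 0| |x 1| ≤ Kcouple 1 x := by
  apply le_csInf (Kset_nonempty 1 x)
  rintro s ⟨y, rfl⟩
  rw [Fin.sum_univ_two, sup2 (fun i => |y i|)]
  have h0 : |x 0 - y 0| ≤ Real.sqrt ((x 0 - y 0)^2 + (x 1 - y 1)^2) := by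
    rw [← Real.sqrt_sq_eq_abs]
    apply Real.sqrt_le_sqrt
    nlinarith [sq_nonneg (x 1 - y 1)]
  have h1 : |x 1 - y 1| ≤ Real.sqrt ((x 0 - y 0)^2 + (x 1 - y 1)^2) := by
    rw [← Real.sqrt_sq_eq_abs]
    apply Real.sqrt_le_sqrt
    nlinarith [sq_nonneg (x 0 - y 0)]
  have a0 : |x 0| ≤ |x 0 - y 0| + |y 0| := by
    calc |x 0| = |(x 0 - y 0) + y 0| := by ring_nf
    _ ≤ |x 0 - y 0| + |y 0| := abs_add_le _ _
  have a1 : |x 1| ≤ |x 1 - y 1| + |y 1| := by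
    calc |x 1| = |(x 1 - y 1) + y 1| := by ring_nf
    _ ≤ |x 1 - y 1| + |y 1| := abs_add_le _ _
  simp only [one_mul]
  apply max_le
  · have : (|y 0| : ℝ) ≤ max |y 0| |y 1| := le_max_left _ _
    linarith
  · have : (|y 1| : ℝ) ≤ max |y 0| |y 1| := le_max_right _ _
    linarith

lemma K_two_le (x : Fin 2 → ℝ) : Kcouple 2 x ≤ Real.sqrt (∑ i, x i ^ 2) := by
  apply csInf_le (Kset_bddBelow 2 (by norm_num) x)
  refine ⟨0, ?_⟩
  simp [sup2 (fun i => |(0 : Fin 2 → ℝ) i|)]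

lemma le_K_two (x : Fin 2 → ℝ) : Real.sqrt (∑ i, x i ^ 2) ≤ Kcouple 2 x := by
  apply le_csInf (Kset_nonempty 2 x)
  rintro s ⟨y, rfl⟩
  rw [Fin.sum_univ_two, Fin.sum_univ_two, sup2 (fun i => |y i|)]
  have tri := triangle2 (x 0) (x 1) (y 0) (y 1)
  have hy : Real.sqrt (y 0 ^2 + y 1 ^2) ≤ 2 * max |y 0| |y 1| := by
    have hM : (0:ℝ) ≤ max |y 0| |y 1| := le_max_of_le_left (abs_nonneg _)
    have h1 : y 0 ^ 2 + y 1 ^ 2 ≤ (2 * max |y 0| |y 1|)^2 := by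
      have e0 : |y 0| ≤ max |y 0| |y 1| := le_max_left _ _
      have e1 : |y 1| ≤ max |y 0| |y 1| := le_max_right _ _
      nlinarith [abs_nonneg (y 0), abs_nonneg (y 1), sq_abs (y 0), sq_abs (y 1)]
    calc Real.sqrt (y 0 ^2 + y 1 ^2) ≤ Real.sqrt ((2 * max |y 0| |y 1|)^2) := Real.sqrt_le_sqrt h1
    _ = 2 * max |y 0| |y 1| := Real.sqrt_sq (by positivity)
  linarith


/-- Existence of a suitable 2×2 matrix (p q ; r s) sending (a,b) to (c,d). -/
def GoodQuad (a b c d : ℝ) : Prop :=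
  ∃ p q r s : ℝ, p*a + q*b = c ∧ r*a + s*b = d ∧ |p| + |q| ≤ 1 ∧ |r| + |s| ≤ 1 ∧
    ∀ x y : ℝ, (p*x + q*y)^2 + (r*x + s*y)^2 ≤ x^2 + y^2

lemma GoodQuad.swapIn {a b c d : ℝ} (h : GoodQuad a b c d) : GoodQuad b a c d := by
  obtain ⟨p, q, r, s, e1, e2, n1, n2, sp⟩ := h
  exact ⟨q, p, s, r, by linarith, by linarith, by linarith, by linarith,
    fun x y => by have := sp y x; linarith⟩

lemma GoodQuad.swapOut {a b c d : ℝ} (h : GoodQuad a b c d) : GoodQuad a b d c := by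
  obtain ⟨p, q, r, s, e1, e2, n1, n2, sp⟩ := h
  exact ⟨r, s, p, q, e2, e1, n2, n1, fun x y => by have := sp x y; linarith⟩

lemma GoodQuad.negIn1 {a b c d : ℝ} (h : GoodQuad a b c d) : GoodQuad (-a) b c d := by
  obtain ⟨p, q, r, s, e1, e2, n1, n2, sp⟩ := h
  refine ⟨-p, q, -r, s, by linarith, by linarith, by rw [abs_neg]; linarith,
    by rw [abs_neg]; linarith, fun x y => by have := sp (-x) y; nlinarith⟩

lemma GoodQuad.negIn2 {a b c d : ℝ} (h : GoodQuad a b c d) : GoodQuad a (-b) c d := by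
  obtain ⟨p, q, r, s, e1, e2, n1, n2, sp⟩ := h
  refine ⟨p, -q, r, -s, by linarith, by linarith, by rw [abs_neg]; linarith,
    by rw [abs_neg]; linarith, fun x y => by have := sp x (-y); nlinarith⟩

lemma GoodQuad.negOut1 {a b c d : ℝ} (h : GoodQuad a b c d) : GoodQuad a b (-c) d := by
  obtain ⟨p, q, r, s, e1, e2, n1, n2, sp⟩ := h
  refine ⟨-p, -q, r, s, by linarith, by linarith, by rw [abs_neg, abs_neg]; linarith,
    n2, fun x y => by have := sp x y; nlinarith⟩

lemma GoodQuad.negOut2 {a b c d : ℝ} (h : GoodQuad a b c d) : GoodQuad a b c (-d) := by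
  obtain ⟨p, q, r, s, e1, e2, n1, n2, sp⟩ := h
  refine ⟨p, q, -r, -s, by linarith, by linarith, n1,
    by rw [abs_neg, abs_neg]; linarith, fun x y => by have := sp x y; nlinarith⟩


lemma star_ineq (a b c d : ℝ) (hb : 0 ≤ b) (hbd : b ≤ d) (hdc : d ≤ c) (hca : c ≤ a)
    (h2 : c^2+d^2 ≤ a^2+b^2) :
    (c^2+d^2)*(a+b) ≤ (a^2+b^2)*(c+d) := by
  nlinarith [mul_nonneg (sub_nonneg.2 hca) (sub_nonneg.2 hbd),
    mul_nonneg (sub_nonneg.2 hdc) (sub_nonneg.2 hbd), sq_nonneg (a-c), sq_nonneg (d-b),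
    sq_nonneg (a*d-b*c), sq_nonneg (a*b-c*d), mul_nonneg (sub_nonneg.2 hca) (sub_nonneg.2 hdc),
    sq_nonneg (c-d), sq_nonneg (a-b)]

lemma spectral_aux (a b c d μ : ℝ) (hR : 0 < a^2+b^2) (h2 : c^2+d^2 ≤ a^2+b^2)
    (hμ : μ^2*(c^2+d^2) ≤ a^2+b^2) (x y : ℝ) :
    ((c*a+μ*(d*b))/(a^2+b^2)*x + (c*b-μ*(d*a))/(a^2+b^2)*y)^2
      + ((d*a-μ*(c*b))/(a^2+b^2)*x + (d*b+μ*(c*a))/(a^2+b^2)*y)^2 ≤ x^2 + y^2 := by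
  have hid : ((c*a+μ*(d*b))/(a^2+b^2)*x + (c*b-μ*(d*a))/(a^2+b^2)*y)^2
      + ((d*a-μ*(c*b))/(a^2+b^2)*x + (d*b+μ*(c*a))/(a^2+b^2)*y)^2
      = ((c^2+d^2)*((a*x+b*y)^2 + μ^2*(a*y-b*x)^2)) / (a^2+b^2)^2 := by
    field_simp
    ring
  rw [hid, div_le_iff₀ (by positivity)]
  have k1 : (c^2+d^2)*(a*x+b*y)^2 ≤ (a^2+b^2)*(a*x+b*y)^2 :=
    mul_le_mul_of_nonneg_right h2 (sq_nonneg _)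
  have k2 : μ^2*(c^2+d^2)*(a*y-b*x)^2 ≤ (a^2+b^2)*(a*y-b*x)^2 :=
    mul_le_mul_of_nonneg_right hμ (sq_nonneg _)
  nlinarith [k1, k2]

lemma mainQuad (a b c d : ℝ) (hb : 0 ≤ b) (hba : b ≤ a) (hd : 0 ≤ d) (hdc : d ≤ c)
    (hca : c ≤ a) (h2 : c^2+d^2 ≤ a^2+b^2) : GoodQuad a b c d := by
  have hc : 0 ≤ c := hd.trans hdc
  have ha : 0 ≤ a := hb.trans hba
  by_cases hdb : d ≤ b
  · -- diagonal case
    have hp0 : 0 ≤ c/a := div_nonneg hc ha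
    have hs0 : 0 ≤ d/b := div_nonneg hd hb
    have hp1 : c/a ≤ 1 := by
      rcases eq_or_lt_of_le ha with h|h
      · have hc0 : c = 0 := le_antisymm (by linarith) hc
        simp [hc0, ← h]
      · exact (div_le_one h).2 hca
    have hs1 : d/b ≤ 1 := by
      rcases eq_or_lt_of_le hb with h|h
      · have hd0 : d = 0 := le_antisymm (by linarith) hd
        simp [hd0, ← h]
      · exact (div_le_one h).2 hdb
    refine ⟨c/a, 0, 0, d/b, ?_, ?_, ?_, ?_, ?_⟩
    · rcases eq_or_lt_of_le ha with h|h
      · have hc0 : c = 0 := le_antisymm (by linarith) hc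
        simp [hc0, ← h]
      · field_simp
        ring
    · rcases eq_or_lt_of_le hb with h|h
      · have hd0 : d = 0 := le_antisymm (by linarith) hd
        simp [hd0, ← h]
      · field_simp
        ring
    · simp [abs_of_nonneg hp0]; linarith
    · simp [abs_of_nonneg hs0]; linarith
    · intro x y
      have hpp : (c/a)^2 ≤ 1 := by nlinarith
      have hss : (d/b)^2 ≤ 1 := by nlinarith
      have e1 : (c/a)^2*x^2 ≤ 1*x^2 := mul_le_mul_of_nonneg_right hpp (sq_nonneg x)
      have e2 : (d/b)^2*y^2 ≤ 1*y^2 := mul_le_mul_of_nonneg_right hss (sq_nonneg y)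
      nlinarith [e1, e2]
  · -- rotation case
    push_neg at hdb
    have hd0 : 0 < d := lt_of_le_of_lt hb hdb
    have hc0 : 0 < c := hd0.trans_le hdc
    have ha0 : 0 < a := hc0.trans_le hca
    have hab : b < a := hdb.trans_le (hdc.trans hca)
    have hR : 0 < a^2+b^2 := by positivity
    have hden : 0 < d*(a-b) := mul_pos hd0 (by linarith)
    have hcbda : c*b ≤ d*a := by nlinarith
    obtain ⟨μ, hμ0, f1, f2, f3⟩ : ∃ μ : ℝ, 0 ≤ μ ∧ μ*(d*a) ≤ c*b ∧
        c*(a+b) - μ*(d*(a-b)) ≤ a^2+b^2 ∧ d*(a+b) + μ*(c*(a-b)) ≤ a^2+b^2 := by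
      by_cases hE : c*(a+b) ≤ a^2+b^2
      · refine ⟨0, le_refl 0, ?_, by linarith, ?_⟩
        · simpa using mul_nonneg hc hb
        · nlinarith [sq_nonneg (a+b-2*d), sq_nonneg (a-b),
            mul_nonneg (sub_nonneg.2 hdc) (by linarith : (0:ℝ) ≤ c+d)]
      · push_neg at hE
        set μ : ℝ := (c*(a+b) - (a^2+b^2))/(d*(a-b)) with hμv
        have hμ0 : 0 ≤ μ := le_of_lt (div_pos (by linarith) hden)
        refine ⟨μ, hμ0, ?_, ?_, ?_⟩
        · rw [hμv, div_mul_eq_mul_div, div_le_iff₀ hden]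
          nlinarith [mul_nonneg hd (mul_nonneg (sub_nonneg.2 hca) hR.le)]
        · rw [hμv, div_mul_cancel₀ _ hden.ne']
          linarith
        · have hkey2 : 0 ≤ (a-b)*((a^2+b^2)*(c+d) - (c^2+d^2)*(a+b)) :=
            mul_nonneg (by linarith)
              (by linarith [star_ineq a b c d hb hdb.le hdc hca h2])
          have hstep : (c*(a+b) - (a^2+b^2))*(c*(a-b)) ≤ (a^2+b^2 - d*(a+b))*(d*(a-b)) := by
            nlinarith [hkey2]
          have : μ*(c*(a-b)) ≤ a^2+b^2 - d*(a+b) := by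
            rw [hμv, div_mul_eq_mul_div, div_le_iff₀ hden]
            exact hstep
          linarith
    have fr : μ*(c*b) ≤ d*a := by
      have h1 : μ*(c*b) ≤ μ*(d*a) := mul_le_mul_of_nonneg_left hcbda hμ0
      linarith
    have fμsq : μ^2*(c^2+d^2) ≤ a^2+b^2 := by
      have hμda : 0 ≤ μ*(d*a) := mul_nonneg hμ0 (mul_nonneg hd ha)
      have g1 : (μ*(d*a))^2 ≤ (c*b)^2 := pow_le_pow_left₀ hμda f1 2
      have g2 : (c*b)^2*(c^2+d^2) ≤ (d*a)^2*(a^2+b^2) :=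
        mul_le_mul (pow_le_pow_left₀ (mul_nonneg hc hb) hcbda 2) h2 (by positivity)
          (by positivity)
      have g3 : μ^2*(c^2+d^2)*((d*a)^2) ≤ (a^2+b^2)*((d*a)^2) := by
        calc μ^2*(c^2+d^2)*((d*a)^2) = (μ*(d*a))^2*(c^2+d^2) := by ring
        _ ≤ (c*b)^2*(c^2+d^2) := mul_le_mul_of_nonneg_right g1 (by positivity)
        _ ≤ (d*a)^2*(a^2+b^2) := g2
        _ = (a^2+b^2)*((d*a)^2) := by ring
      exact le_of_mul_le_mul_right g3 (by positivity)
    have hpnum : 0 ≤ c*a + μ*(d*b) := by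
      have h1 := mul_nonneg hμ0 (mul_nonneg hd hb)
      have h2' := mul_nonneg hc ha
      linarith
    have hqnum : 0 ≤ c*b - μ*(d*a) := by linarith
    have hrnum : 0 ≤ d*a - μ*(c*b) := by linarith
    have hsnum : 0 ≤ d*b + μ*(c*a) := by
      have h1 := mul_nonneg hμ0 (mul_nonneg hc ha)
      have h2' := mul_nonneg hd hb
      linarith
    refine ⟨(c*a+μ*(d*b))/(a^2+b^2), (c*b-μ*(d*a))/(a^2+b^2),
      (d*a-μ*(c*b))/(a^2+b^2), (d*b+μ*(c*a))/(a^2+b^2), ?_, ?_, ?_, ?_,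
      spectral_aux a b c d μ hR h2 fμsq⟩
    · field_simp
      ring
    · field_simp
      ring
    · rw [abs_of_nonneg (div_nonneg hpnum hR.le), abs_of_nonneg (div_nonneg hqnum hR.le),
        ← add_div, div_le_one hR]
      linarith [f2]
    · rw [abs_of_nonneg (div_nonneg hrnum hR.le), abs_of_nonneg (div_nonneg hsnum hR.le),
        ← add_div, div_le_one hR]
      linarith [f3]


lemma sqsum (u v : ℝ) : (max |u| |v|)^2 + (min |u| |v|)^2 = u^2 + v^2 := by
  rcases le_total |u| |v| with h|h
  · rw [max_eq_right h, min_eq_left h, sq_abs, sq_abs]; try ring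
  · rw [max_eq_left h, min_eq_right h, sq_abs, sq_abs]; try ring

lemma quad_of_norms (f g : Fin 2 → ℝ) (Hinf : max |g 0| |g 1| ≤ max |f 0| |f 1|)
    (H2 : g 0^2 + g 1^2 ≤ f 0^2 + f 1^2) : GoodQuad (f 0) (f 1) (g 0) (g 1) := by
  have key : GoodQuad (max |f 0| |f 1|) (min |f 0| |f 1|)
      (max |g 0| |g 1|) (min |g 0| |g 1|) := by
    apply mainQuad
    · exact le_min (abs_nonneg _) (abs_nonneg _)
    · exact min_le_max
    · exact le_min (abs_nonneg _) (abs_nonneg _)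
    · exact min_le_max
    · exact Hinf
    · rw [sqsum, sqsum]; exact H2
  have keyf : GoodQuad |f 0| |f 1| (max |g 0| |g 1|) (min |g 0| |g 1|) := by
    rcases le_total |f 1| |f 0| with h|h
    · rwa [max_eq_left h, min_eq_right h] at key
    · rw [max_eq_right h, min_eq_left h] at key
      exact key.swapIn
  have keyg : GoodQuad |f 0| |f 1| |g 0| |g 1| := by
    rcases le_total |g 1| |g 0| with h|h
    · rwa [max_eq_left h, min_eq_right h] at keyf
    · rw [max_eq_right h, min_eq_left h] at keyf
      exact keyf.swapOut
  have t1 : GoodQuad (f 0) |f 1| |g 0| |g 1| := by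
    rcases abs_choice (f 0) with h|h
    · rwa [h] at keyg
    · have := keyg.negIn1
      rwa [h, neg_neg] at this
  have t2 : GoodQuad (f 0) (f 1) |g 0| |g 1| := by
    rcases abs_choice (f 1) with h|h
    · rwa [h] at t1
    · have := t1.negIn2
      rwa [h, neg_neg] at this
  have t3 : GoodQuad (f 0) (f 1) (g 0) |g 1| := by
    rcases abs_choice (g 0) with h|h
    · rwa [h] at t2
    · have := t2.negOut1
      rwa [h, neg_neg] at this
  rcases abs_choice (g 1) with h|h
  · rwa [h] at t3
  · have := t3.negOut2
    rwa [h, neg_neg] at this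

/-- The couple `(ℓ²₂, ℓ∞₂)` is an exact Calderón couple. -/
theorem exact_calderon_dim_two (f g : Fin 2 → ℝ)
    (h : ∀ t > (0 : ℝ), Kcouple t g ≤ Kcouple t f) :
    ∃ T : (Fin 2 → ℝ) →ₗ[ℝ] (Fin 2 → ℝ), T f = g ∧
      (∀ x, Real.sqrt (∑ i, (T x) i ^ 2) ≤ Real.sqrt (∑ i, x i ^ 2)) ∧
      (∀ x, (⨆ i, |(T x) i|) ≤ ⨆ i, |x i|) := by
  have Hinf : max |g 0| |g 1| ≤ max |f 0| |f 1| :=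
    (le_K_one g).trans ((h 1 one_pos).trans (K_one_le f))
  have H2' : Real.sqrt (∑ i, g i ^ 2) ≤ Real.sqrt (∑ i, f i ^ 2) :=
    (le_K_two g).trans ((h 2 two_pos).trans (K_two_le f))
  have H2 : g 0^2 + g 1^2 ≤ f 0^2 + f 1^2 := by
    rw [Fin.sum_univ_two, Fin.sum_univ_two] at H2'
    exact (Real.sqrt_le_sqrt_iff (by positivity)).1 H2'
  obtain ⟨p, q, r, s, e1, e2, n1, n2, sp⟩ := quad_of_norms f g Hinf H2
  refine ⟨LinearMap.mk (AddHom.mk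
      (fun x => (![p * x 0 + q * x 1, r * x 0 + s * x 1] : Fin 2 → ℝ)) ?_) ?_, ?_, ?_, ?_⟩
  · intro x y
    funext i
    fin_cases i <;>
      simp [Matrix.cons_val_zero, Matrix.cons_val_one, Matrix.head_cons] <;> ring
  · intro m x
    funext i
    fin_cases i <;>
      simp [Matrix.cons_val_zero, Matrix.cons_val_one, Matrix.head_cons, smul_eq_mul] <;> ring
  · funext i
    fin_cases i
    · simpa using e1
    · simpa using e2
  · intro x
    apply Real.sqrt_le_sqrt
    rw [Fin.sum_univ_two, Fin.sum_univ_two]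
    simpa using sp (x 0) (x 1)
  · intro x
    simp only [LinearMap.coe_mk, AddHom.coe_mk]
    rw [sup2 (fun i => |(![p * x 0 + q * x 1, r * x 0 + s * x 1]) i|),
      sup2 (fun i => |x i|)]
    simp only [Matrix.cons_val_zero, Matrix.cons_val_one, Matrix.head_cons]
    have M0 : |x 0| ≤ max |x 0| |x 1| := le_max_left _ _
    have M1 : |x 1| ≤ max |x 0| |x 1| := le_max_right _ _
    have Mnn : (0:ℝ) ≤ max |x 0| |x 1| := le_trans (abs_nonneg _) M0
    have key : ∀ u v : ℝ, |u| + |v| ≤ 1 → |u * x 0 + v * x 1| ≤ max |x 0| |x 1| := by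
      intro u v huv
      calc |u * x 0 + v * x 1| ≤ |u * x 0| + |v * x 1| := abs_add_le _ _
      _ = |u| * |x 0| + |v| * |x 1| := by rw [abs_mul, abs_mul]
      _ ≤ |u| * (max |x 0| |x 1|) + |v| * (max |x 0| |x 1|) :=
          add_le_add (mul_le_mul_of_nonneg_left M0 (abs_nonneg u))
            (mul_le_mul_of_nonneg_left M1 (abs_nonneg v))
      _ = (|u| + |v|) * (max |x 0| |x 1|) := by ring
      _ ≤ 1 * (max |x 0| |x 1|) := mul_le_mul_of_nonneg_right huv Mnn
      _ = max |x 0| |x 1| := one_mul _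
    exact max_le (key p q n1) (key r s n2)
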